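/- arXiv:0706.2791 — 2 statements merged into one kernel-verified Lean document; each statement's English description precedes it below -/
import Mathlib

section
/- If X and Y are positive semidefinite matrices on ℂ^N ⊗ ℂ^N, then their composition X ⊙ Y := (X^R Y^R)^R is also positive semidefinite. -/
open scoped ComplexOrder

/-- Reshuffling: `(X^R)_{mn,μν} = X_{mμ,nν}`. -/
noncomputable def reshuffle {N : ℕ} (X : Matrix (Fin N × Fin N) (Fin N × Fin N) ℂ) :
    Matrix (Fin N × Fin N) (Fin N × Fin N) ℂ :=
  fun p q => X (p.1, q.1) (p.2, q.2)

/-- Composition of states: `X ⊙ Y := (X^R Y^R)^R`. -/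
noncomputable def odot {N : ℕ} (X Y : Matrix (Fin N × Fin N) (Fin N × Fin N) ℂ) :
    Matrix (Fin N × Fin N) (Fin N × Fin N) ℂ :=
  reshuffle (reshuffle X * reshuffle Y)

/-!
Entrywise, `(X ⊙ Y)_{(i,j),(k,l)} = ∑_{a,b} X_{(i,a),(k,b)} Y_{(a,j),(b,l)}`: the composition is the
link product of `X` and `Y`. It is therefore the compression `Wᴴ (X ⊗ Y) W` of the Kronecker product
by the 0/1 matrix `W = linkMatrix` that identifies the two middle indices, and compressions of
positive semidefinite matrices are positive semidefinite.
-/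

open scoped Kronecker

namespace Matrix

variable (α β γ R : Type*) [DecidableEq α] [DecidableEq β] [DecidableEq γ]

def linkMatrix [Zero R] [One R] : Matrix ((α × β) × (β × γ)) (α × γ) R :=
  fun r p => if r.1.1 = p.1 ∧ r.1.2 = r.2.1 ∧ r.2.2 = p.2 then 1 else 0

variable {α β γ R}

theorem conjTranspose_linkMatrix [NonAssocSemiring R] [StarRing R] :
    (linkMatrix α β γ R)ᴴ = (linkMatrix α β γ R)ᵀ := by
  ext p r
  simp [linkMatrix, apply_ite star]

variable [Fintype α] [Fintype β] [Fintype γ] [NonAssocSemiring R]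

theorem sum_linkMatrix_mul (v : (α × β) × (β × γ) → R) (p : α × γ) :
    ∑ r, linkMatrix α β γ R r p * v r = ∑ a, v ((p.1, a), (a, p.2)) := by
  simp [linkMatrix, Fintype.sum_prod_type, ite_and]

theorem sum_mul_linkMatrix (v : (α × β) × (β × γ) → R) (p : α × γ) :
    ∑ r, v r * linkMatrix α β γ R r p = ∑ a, v ((p.1, a), (a, p.2)) := by
  simp [linkMatrix, Fintype.sum_prod_type, ite_and]

theorem conjTranspose_linkMatrix_mul_mul_linkMatrix_apply [StarRing R]
    (M : Matrix ((α × β) × (β × γ)) ((α × β) × (β × γ)) R) (p q : α × γ) :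
    ((linkMatrix α β γ R)ᴴ * M * linkMatrix α β γ R) p q =
      ∑ a, ∑ b, M ((p.1, a), (a, p.2)) ((q.1, b), (b, q.2)) := by
  simp only [conjTranspose_linkMatrix, mul_apply, transpose_apply, sum_linkMatrix_mul,
    sum_mul_linkMatrix]
  exact Finset.sum_comm

end Matrix

open Matrix

theorem odot_apply {N : ℕ} (X Y : Matrix (Fin N × Fin N) (Fin N × Fin N) ℂ) (p q : Fin N × Fin N) :
    odot X Y p q = ∑ a, ∑ b, X (p.1, a) (q.1, b) * Y (a, p.2) (b, q.2) := by
  simp [odot, reshuffle, mul_apply, Fintype.sum_prod_type]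

theorem odot_eq_conjTranspose_linkMatrix_mul_kronecker_mul_linkMatrix {N : ℕ}
    (X Y : Matrix (Fin N × Fin N) (Fin N × Fin N) ℂ) :
    odot X Y = (linkMatrix (Fin N) (Fin N) (Fin N) ℂ)ᴴ * (X ⊗ₖ Y) *
      linkMatrix (Fin N) (Fin N) (Fin N) ℂ := by
  ext p q
  simp only [odot_apply, conjTranspose_linkMatrix_mul_mul_linkMatrix_apply, kroneckerMap_apply]

/-- If `X, Y ≥ 0` then `X ⊙ Y = (X^R Y^R)^R ≥ 0`. -/
theorem odot_posSemidef {N : ℕ} (X Y : Matrix (Fin N × Fin N) (Fin N × Fin N) ℂ)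
    (hX : X.PosSemidef) (hY : Y.PosSemidef) : (odot X Y).PosSemidef := by
  rw [odot_eq_conjTranspose_linkMatrix_mul_kronecker_mul_linkMatrix]
  exact (hX.kronecker hY).conjTranspose_mul_mul_same _
end

section
/- If σ₁ and σ₂ are Hermitian matrices on ℂ^N ⊗ ℂ^N, then σ₁ ⊙ σ₂ := (σ₁^R σ₂^R)^R is Hermitian. -/
open Matrix

def swapConj {m n α : Type*} [Star α] (A : Matrix (m × n) (m × n) α) :
    Matrix (n × m) (n × m) α :=
  (A.submatrix Prod.swap Prod.swap).map star

theorem swapConj_mul {m n α : Type*} [Fintype m] [Fintype n] [CommSemiring α] [StarRing α]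
    (A B : Matrix (m × n) (m × n) α) : swapConj (A * B) = swapConj A * swapConj B := by
  rw [swapConj, ← submatrix_mul_equiv A B Prod.swap (Equiv.prodComm _ _) Prod.swap]
  exact Matrix.map_mul (f := starRingEnd α)

theorem reshuffle_reshuffle {N : ℕ} (X : Matrix (Fin N × Fin N) (Fin N × Fin N) ℂ) :
    reshuffle (reshuffle X) = X :=
  rfl

theorem reshuffle_conjTranspose {N : ℕ} (X : Matrix (Fin N × Fin N) (Fin N × Fin N) ℂ) :
    reshuffle Xᴴ = swapConj (reshuffle X) :=
  rfl

theorem conjTranspose_odot {N : ℕ} (X Y : Matrix (Fin N × Fin N) (Fin N × Fin N) ℂ) :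
    (odot X Y)ᴴ = odot Xᴴ Yᴴ := by
  rw [← reshuffle_reshuffle (odot X Y)ᴴ, reshuffle_conjTranspose, odot, reshuffle_reshuffle,
    swapConj_mul, ← reshuffle_conjTranspose, ← reshuffle_conjTranspose, odot]

/-- If `σ₁` and `σ₂` are Hermitian then so is `σ₁ ⊙ σ₂`. -/
theorem odot_isHermitian {N : ℕ} (σ₁ σ₂ : Matrix (Fin N × Fin N) (Fin N × Fin N) ℂ)
    (h₁ : σ₁.IsHermitian) (h₂ : σ₂.IsHermitian) : (odot σ₁ σ₂).IsHermitian := by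
  rw [IsHermitian, conjTranspose_odot, h₁.eq, h₂.eq]
end
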